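/- arXiv:2501.16152 — 2 statements merged into one kernel-verified Lean document; each statement's English description precedes it below -/
import Mathlib

section
/- Let f, g : X → Y and f', g' : X' → Y' be fibrewise maps over B such that X ×_B X' is a normal space. Then D_B(f ×_B f', g ×_B g') ≤ D_B(f, g) + D_B(f', g'). -/
open scoped unitInterval

variable {B X Y Z X' Y' : Type*} [TopologicalSpace B] [TopologicalSpace X]
  [TopologicalSpace Y] [TopologicalSpace Z] [TopologicalSpace X'] [TopologicalSpace Y']

/-- `f` and `g` are fibrewise homotopic over `B` on the subset `U ⊆ X`:
there is a homotopy `H` from `f|U` to `g|U` each of whose stages is fibrewise. -/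
def FibHomotopicOn (pX : X → B) (pY : Y → B) (f g : X → Y) (U : Set X) : Prop :=
  ∃ H : C(U × unitInterval, Y),
    (∀ u : U, H (u, 0) = f u) ∧ (∀ u : U, H (u, 1) = g u) ∧
    (∀ (u : U) (t : unitInterval), pY (H (u, t)) = pX u)

/-- The parametrized (fibrewise) homotopic distance `D_B(f,g)`: the least `n`
such that `X` has an open cover by `n+1` sets on each of which `f` and `g` are
fibrewise homotopic (`∞` if there is no such cover). -/
noncomputable def fibDist (pX : X → B) (pY : Y → B) (f g : X → Y) : ℕ∞ :=
  sInf ((fun n : ℕ => (n : ℕ∞)) ''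
    {n : ℕ | ∃ U : Fin (n + 1) → Set X,
      (∀ i, IsOpen (U i)) ∧ (⋃ i, U i) = Set.univ ∧
      ∀ i, FibHomotopicOn pX pY f g (U i)})

section Aux
variable {B X Y : Type*} [TopologicalSpace B] [TopologicalSpace X] [TopologicalSpace Y]
  {pX : X → B} {pY : Y → B} {f g : X → Y}

lemma FibHomotopicOn.mono {U V : Set X} (h : FibHomotopicOn pX pY f g U) (hVU : V ⊆ U) :
    FibHomotopicOn pX pY f g V := by
  obtain ⟨H, h0, h1, hp⟩ := h
  refine ⟨H.comp ⟨fun p => (Set.inclusion hVU p.1, p.2), ?_⟩, ?_, ?_, ?_⟩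
  · exact ((continuous_subtype_val.comp continuous_fst).subtype_mk _).prodMk continuous_snd
  · exact fun u => h0 (Set.inclusion hVU u)
  · exact fun u => h1 (Set.inclusion hVU u)
  · exact fun u t => hp (Set.inclusion hVU u) t

lemma fibHomotopicOn_iUnion {ι : Type*} {O : ι → Set X}
    (hop : ∀ i, IsOpen (O i)) (hdis : ∀ i j, i ≠ j → Disjoint (O i) (O j))
    (h : ∀ i, FibHomotopicOn pX pY f g (O i)) :
    FibHomotopicOn pX pY f g (⋃ i, O i) := by
  classical
  choose H h0 h1 hp using h
  have idx : ∀ z : ↥(⋃ i, O i), ∃ i, (z : X) ∈ O i := fun z => Set.mem_iUnion.1 z.2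
  let J : ↥(⋃ i, O i) → ι := fun z => (idx z).choose
  have hJ : ∀ z, (z : X) ∈ O (J z) := fun z => (idx z).choose_spec
  have huniq : ∀ (z : ↥(⋃ i, O i)) i, (z : X) ∈ O i → J z = i := by
    intro z i hi
    by_contra hne
    exact Set.disjoint_left.mp (hdis _ _ hne) (hJ z) hi
  let K : ↥(⋃ i, O i) × unitInterval → Y := fun p => H (J p.1) (⟨p.1, hJ p.1⟩, p.2)
  have key : ∀ (z : ↥(⋃ i, O i)) (t : unitInterval) (i) (hzi : (z : X) ∈ O i),
      K (z, t) = H i (⟨z, hzi⟩, t) := by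
    intro z t i hzi
    have h := huniq z i hzi
    subst h
    rfl
  have hK : Continuous K := by
    rw [continuous_iff_continuousAt]
    intro p
    have hW : IsOpen {q : ↥(⋃ i, O i) × unitInterval | (q.1 : X) ∈ O (J p.1)} :=
      (hop _).preimage (continuous_subtype_val.comp continuous_fst)
    refine ContinuousOn.continuousAt ?_ (hW.mem_nhds (hJ p.1))
    rw [continuousOn_iff_continuous_restrict]
    have heq : ∀ q : {q : ↥(⋃ i, O i) × unitInterval // (q.1 : X) ∈ O (J p.1)},
        K q.1 = H (J p.1) (⟨q.1.1, q.2⟩, q.1.2) := fun q => key _ _ _ q.2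
    refine Continuous.congr ?_ (fun q => (heq q).symm)
    exact (H (J p.1)).continuous.comp
      (((continuous_subtype_val.comp (continuous_fst.comp continuous_subtype_val)).subtype_mk
        _).prodMk (continuous_snd.comp continuous_subtype_val))
  refine ⟨⟨K, hK⟩, fun u => ?_, fun u => ?_, fun u t => ?_⟩
  · exact h0 (J u) ⟨u, hJ u⟩
  · exact h1 (J u) ⟨u, hJ u⟩
  · exact hp (J u) ⟨u, hJ u⟩ t

lemma exists_bump_family {Z : Type*} [TopologicalSpace Z] [NormalSpace Z] {ι : Type*} [Finite ι]
    (A : ι → Set Z) (hA : ∀ i, IsOpen (A i)) (hcov : ⋃ i, A i = Set.univ) :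
    ∃ φ : ι → C(Z, ℝ), (∀ i z, 0 ≤ φ i z) ∧ (∀ i z, 0 < φ i z → z ∈ A i) ∧
      (∀ z, ∃ i, 0 < φ i z) := by
  obtain ⟨v, hvU, hvc, hvA⟩ := exists_iUnion_eq_closed_subset hA
    (fun x => Set.toFinite _) hcov
  choose φ hφ0 hφ1 hφm using fun i =>
    exists_continuous_zero_one_of_isClosed (hA i).isClosed_compl (hvc i)
      (Set.disjoint_compl_left_iff_subset.mpr (hvA i))
  refine ⟨φ, fun i z => (hφm i z).1, fun i z hz => ?_, fun z => ?_⟩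
  · by_contra hzA
    have : φ i z = 0 := hφ0 i hzA
    simp [this] at hz
  · obtain ⟨i, hi⟩ : ∃ i, z ∈ v i := Set.mem_iUnion.1 (hvU ▸ Set.mem_univ z)
    exact ⟨i, by simp [hφ1 i hi]⟩

end Aux
section Prod
variable {B X Y X' Y' : Type*} [TopologicalSpace B] [TopologicalSpace X]
  [TopologicalSpace Y] [TopologicalSpace X'] [TopologicalSpace Y']
  {pX : X → B} {pX' : X' → B} {pY : Y → B} {pY' : Y' → B}
  {f g : X → Y} {f' g' : X' → Y'}

lemma fibHomotopicOn_prodPiece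
    (hfp : ∀ x, pY (f x) = pX x) (hgp : ∀ x, pY (g x) = pX x)
    (hfp' : ∀ x, pY' (f' x) = pX' x) (hgp' : ∀ x, pY' (g' x) = pX' x)
    {U : Set X} {V : Set X'}
    (h : FibHomotopicOn pX pY f g U) (h' : FibHomotopicOn pX' pY' f' g' V) :
    FibHomotopicOn (fun z : {z : X × X' // pX z.1 = pX' z.2} => pX z.val.1)
      (fun w : {w : Y × Y' // pY w.1 = pY' w.2} => pY w.val.1)
      (fun z => (⟨(f z.val.1, f' z.val.2),
        (hfp z.val.1).trans (z.prop.trans (hfp' z.val.2).symm)⟩ :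
          {w : Y × Y' // pY w.1 = pY' w.2}))
      (fun z => (⟨(g z.val.1, g' z.val.2),
        (hgp z.val.1).trans (z.prop.trans (hgp' z.val.2).symm)⟩ :
          {w : Y × Y' // pY w.1 = pY' w.2}))
      {z : {z : X × X' // pX z.1 = pX' z.2} | z.val.1 ∈ U ∧ z.val.2 ∈ V} := by
  obtain ⟨H, H0, H1, Hp⟩ := h
  obtain ⟨H', H0', H1', Hp'⟩ := h'
  refine ⟨⟨fun p => ⟨(H (⟨p.1.val.val.1, p.1.prop.1⟩, p.2), H' (⟨p.1.val.val.2, p.1.prop.2⟩, p.2)),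
      by rw [Hp, Hp']; exact p.1.val.prop⟩, ?_⟩, fun u => ?_, fun u => ?_, fun u t => ?_⟩
  · refine Continuous.subtype_mk (Continuous.prodMk ?_ ?_) _
    · exact H.continuous.comp ((Continuous.subtype_mk
        (continuous_fst.comp (continuous_subtype_val.comp
          (continuous_subtype_val.comp continuous_fst))) _).prodMk continuous_snd)
    · exact H'.continuous.comp ((Continuous.subtype_mk
        (continuous_snd.comp (continuous_subtype_val.comp
          (continuous_subtype_val.comp continuous_fst))) _).prodMk continuous_snd)
  · exact Subtype.ext (Prod.ext (H0 _) (H0' _))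
  · exact Subtype.ext (Prod.ext (H1 _) (H1' _))
  · exact Hp _ t

end Prod

section Main
variable {B X Y X' Y' : Type*} [TopologicalSpace B] [TopologicalSpace X]
  [TopologicalSpace Y] [TopologicalSpace X'] [TopologicalSpace Y']
  {pX : X → B} {pX' : X' → B} {pY : Y → B} {pY' : Y' → B}
  {f g : X → Y} {f' g' : X' → Y'}

lemma main_cover
    (hN : NormalSpace {z : X × X' // pX z.1 = pX' z.2})
    (hfp : ∀ x, pY (f x) = pX x) (hgp : ∀ x, pY (g x) = pX x)
    (hfp' : ∀ x, pY' (f' x) = pX' x) (hgp' : ∀ x, pY' (g' x) = pX' x)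
    {n m : ℕ} (U : Fin (n + 1) → Set X) (V : Fin (m + 1) → Set X')
    (hUo : ∀ i, IsOpen (U i)) (hUc : (⋃ i, U i) = Set.univ)
    (hU : ∀ i, FibHomotopicOn pX pY f g (U i))
    (hVo : ∀ j, IsOpen (V j)) (hVc : (⋃ j, V j) = Set.univ)
    (hV : ∀ j, FibHomotopicOn pX' pY' f' g' (V j)) :
    ∃ W : Fin (n + m + 1) → Set {z : X × X' // pX z.1 = pX' z.2},
      (∀ r, IsOpen (W r)) ∧ (⋃ r, W r) = Set.univ ∧
      ∀ r, FibHomotopicOn (fun z : {z : X × X' // pX z.1 = pX' z.2} => pX z.val.1)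
        (fun w : {w : Y × Y' // pY w.1 = pY' w.2} => pY w.val.1)
        (fun z => (⟨(f z.val.1, f' z.val.2),
          (hfp z.val.1).trans (z.prop.trans (hfp' z.val.2).symm)⟩ :
            {w : Y × Y' // pY w.1 = pY' w.2}))
        (fun z => (⟨(g z.val.1, g' z.val.2),
          (hgp z.val.1).trans (z.prop.trans (hgp' z.val.2).symm)⟩ :
            {w : Y × Y' // pY w.1 = pY' w.2})) (W r) := by
  classical
  set Zp := {z : X × X' // pX z.1 = pX' z.2} with hZp
  -- the pulled-back covers
  set A : Fin (n + 1) → Set Zp := fun i => {z : Zp | z.val.1 ∈ U i} with hA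
  set Bs : Fin (m + 1) → Set Zp := fun j => {z : Zp | z.val.2 ∈ V j} with hBs
  have hAo : ∀ i, IsOpen (A i) := fun i =>
    (hUo i).preimage (continuous_fst.comp continuous_subtype_val)
  have hBo : ∀ j, IsOpen (Bs j) := fun j =>
    (hVo j).preimage (continuous_snd.comp continuous_subtype_val)
  have hAc : (⋃ i, A i) = Set.univ := by
    ext z; simp only [Set.mem_iUnion, Set.mem_univ, iff_true, hA, Set.mem_setOf_eq]
    have : z.val.1 ∈ ⋃ i, U i := hUc ▸ Set.mem_univ _
    exact Set.mem_iUnion.1 this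
  have hBc : (⋃ j, Bs j) = Set.univ := by
    ext z; simp only [Set.mem_iUnion, Set.mem_univ, iff_true, hBs, Set.mem_setOf_eq]
    have : z.val.2 ∈ ⋃ j, V j := hVc ▸ Set.mem_univ _
    exact Set.mem_iUnion.1 this
  obtain ⟨φ, hφ0, hφ1, hφc⟩ := exists_bump_family A hAo hAc
  obtain ⟨ψ, hψ0, hψ1, hψc⟩ := exists_bump_family Bs hBo hBc
  -- the pieces
  set O : Finset (Fin (n + 1)) → Finset (Fin (m + 1)) → Set Zp := fun S T =>
    {z | (∀ i ∈ S, ∀ j ∈ T, 0 < φ i z * ψ j z) ∧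
      ∀ a b, (a ∉ S ∨ b ∉ T) → ∀ i ∈ S, ∀ j ∈ T, φ a z * ψ b z < φ i z * ψ j z} with hO
  have hOopen : ∀ S T, IsOpen (O S T) := by
    intro S T
    have : O S T =
        (⋂ i ∈ S, ⋂ j ∈ T, {z | 0 < φ i z * ψ j z}) ∩
        ⋂ (a) (b) (_ : a ∉ S ∨ b ∉ T), ⋂ i ∈ S, ⋂ j ∈ T,
          {z | φ a z * ψ b z < φ i z * ψ j z} := by
      ext z
      simp only [hO, Set.mem_inter_iff, Set.mem_iInter, Set.mem_setOf_eq]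
    rw [this]
    refine IsOpen.inter ?_ ?_
    · exact isOpen_biInter_finset fun i _ => isOpen_biInter_finset fun j _ =>
        isOpen_lt continuous_const ((φ i).continuous.mul (ψ j).continuous)
    · refine isOpen_iInter_of_finite fun a => isOpen_iInter_of_finite fun b =>
        isOpen_iInter_of_finite fun _ => isOpen_biInter_finset fun i _ =>
        isOpen_biInter_finset fun j _ =>
        isOpen_lt ((φ a).continuous.mul (ψ b).continuous)
          ((φ i).continuous.mul (ψ j).continuous)
  -- positivity extraction
  have hpos : ∀ (S T) (z : Zp), z ∈ O S T → ∀ i ∈ S, ∀ j ∈ T, z ∈ A i ∧ z ∈ Bs j := by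
    intro S T z hz i hi j hj
    have hq := hz.1 i hi j hj
    rcases mul_pos_iff.mp hq with ⟨h1, h2⟩ | ⟨h1, _⟩
    · exact ⟨hφ1 i z h1, hψ1 j z h2⟩
    · exact absurd (hφ0 i z) (not_le.mpr h1)
  -- covering
  have hOcov : ∀ z : Zp, ∃ S T, S.Nonempty ∧ T.Nonempty ∧ z ∈ O S T := by
    intro z
    obtain ⟨i0, hi0⟩ := hφc z
    obtain ⟨j0, hj0⟩ := hψc z
    refine ⟨Finset.univ.filter (fun i => 0 < φ i z),
      Finset.univ.filter (fun j => 0 < ψ j z),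
      ⟨i0, by simpa using hi0⟩, ⟨j0, by simpa using hj0⟩, ?_, ?_⟩
    · intro i hi j hj
      exact mul_pos (Finset.mem_filter.1 hi).2 (Finset.mem_filter.1 hj).2
    · intro a b hab i hi j hj
      have hz : φ a z * ψ b z = 0 := by
        rcases hab with ha | hb
        · have : φ a z = 0 :=
            le_antisymm (not_lt.1 fun h => ha (by simpa using h)) (hφ0 a z)
          simp [this]
        · have : ψ b z = 0 :=
            le_antisymm (not_lt.1 fun h => hb (by simpa using h)) (hψ0 b z)
          simp [this]
      rw [hz]
      exact mul_pos (Finset.mem_filter.1 hi).2 (Finset.mem_filter.1 hj).2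
  -- disjointness helper
  have getpair : ∀ {α β : Type} [DecidableEq α] [DecidableEq β]
      (S S' : Finset α) (T T' : Finset β), S.Nonempty → T.Nonempty →
      ¬(S ⊆ S' ∧ T ⊆ T') → ∃ i ∈ S, ∃ j ∈ T, i ∉ S' ∨ j ∉ T' := by
    intro α β _ _ S S' T T' hS hT h
    rw [not_and_or] at h
    rcases h with h | h
    · obtain ⟨i, hi, hi'⟩ := Finset.not_subset.1 h
      obtain ⟨j, hj⟩ := hT
      exact ⟨i, hi, j, hj, Or.inl hi'⟩
    · obtain ⟨j, hj, hj'⟩ := Finset.not_subset.1 h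
      obtain ⟨i, hi⟩ := hS
      exact ⟨i, hi, j, hj, Or.inr hj'⟩
  have hOdis : ∀ S T S' T', S.Nonempty → T.Nonempty → S'.Nonempty → T'.Nonempty →
      S.card + T.card = S'.card + T'.card → (S, T) ≠ (S', T') →
      Disjoint (O S T) (O S' T') := by
    intro S T S' T' hS hT hS' hT' hcard hne
    rw [Set.disjoint_left]
    intro z hz hz'
    by_cases h1 : S ⊆ S' ∧ T ⊆ T'
    · have hc1 : S'.card ≤ S.card := by
        have := Finset.card_le_card h1.1
        have := Finset.card_le_card h1.2
        omega
      have hc2 : T'.card ≤ T.card := by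
        have := Finset.card_le_card h1.1
        omega
      exact hne (Prod.ext (Finset.eq_of_subset_of_card_le h1.1 hc1)
        (Finset.eq_of_subset_of_card_le h1.2 hc2))
    by_cases h2 : S' ⊆ S ∧ T' ⊆ T
    · have hc1 : S.card ≤ S'.card := by
        have := Finset.card_le_card h2.1
        have := Finset.card_le_card h2.2
        omega
      have hc2 : T.card ≤ T'.card := by
        have := Finset.card_le_card h2.1
        omega
      exact hne (Prod.ext (Finset.eq_of_subset_of_card_le h2.1 hc1).symm
        (Finset.eq_of_subset_of_card_le h2.2 hc2).symm)
    obtain ⟨i, hi, j, hj, hij⟩ := getpair S S' T T' hS hT h1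
    obtain ⟨a, ha, b, hb, hab⟩ := getpair S' S T' T hS' hT' h2
    have l1 := hz.2 a b hab i hi j hj
    have l2 := hz'.2 i j hij a ha b hb
    exact lt_asymm l1 l2
  -- final cover
  refine ⟨fun r => ⋃ (p : {ST : Finset (Fin (n + 1)) × Finset (Fin (m + 1)) //
      ST.1.Nonempty ∧ ST.2.Nonempty ∧ ST.1.card + ST.2.card = (r : ℕ) + 2}),
      O p.val.1 p.val.2, fun r => isOpen_iUnion fun p => hOopen _ _, ?_, fun r => ?_⟩
  · ext z
    simp only [Set.mem_iUnion, Set.mem_univ, iff_true]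
    obtain ⟨S, T, hS, hT, hz⟩ := hOcov z
    have h1 : 1 ≤ S.card := hS.card_pos
    have h2 : 1 ≤ T.card := hT.card_pos
    have h3 : S.card ≤ n + 1 := by simpa using Finset.card_le_univ S
    have h4 : T.card ≤ m + 1 := by simpa using Finset.card_le_univ T
    refine ⟨⟨S.card + T.card - 2, by omega⟩, ⟨(S, T), hS, hT, by simp; omega⟩, hz⟩
  · refine fibHomotopicOn_iUnion (fun p => hOopen _ _) ?_ ?_
    · intro p p' hne
      exact hOdis _ _ _ _ p.prop.1 p.prop.2.1 p'.prop.1 p'.prop.2.1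
        (p.prop.2.2.trans p'.prop.2.2.symm) (fun h => hne (Subtype.ext h))
    · intro p
      obtain ⟨⟨S, T⟩, hS, hT, -⟩ := p
      obtain ⟨i, hi⟩ := hS
      obtain ⟨j, hj⟩ := hT
      refine (fibHomotopicOn_prodPiece hfp hgp hfp' hgp' (hU i) (hV j)).mono ?_
      intro z hz
      exact ⟨(hpos S T z hz i hi j hj).1, (hpos S T z hz i hi j hj).2⟩

end Main


section Final
variable {B X Y : Type*} [TopologicalSpace B] [TopologicalSpace X] [TopologicalSpace Y]

lemma fibDist_le_of_mem (pX : X → B) (pY : Y → B) (f g : X → Y) {n : ℕ}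
    (h : ∃ U : Fin (n + 1) → Set X,
      (∀ i, IsOpen (U i)) ∧ (⋃ i, U i) = Set.univ ∧
      ∀ i, FibHomotopicOn pX pY f g (U i)) :
    fibDist pX pY f g ≤ (n : ℕ∞) :=
  sInf_le (Set.mem_image_of_mem _ h)

lemma fibDist_cases (pX : X → B) (pY : Y → B) (f g : X → Y) :
    fibDist pX pY f g = ⊤ ∨ ∃ n : ℕ, fibDist pX pY f g = (n : ℕ∞) ∧
      ∃ U : Fin (n + 1) → Set X,
        (∀ i, IsOpen (U i)) ∧ (⋃ i, U i) = Set.univ ∧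
        ∀ i, FibHomotopicOn pX pY f g (U i) := by
  set s := {n : ℕ | ∃ U : Fin (n + 1) → Set X,
      (∀ i, IsOpen (U i)) ∧ (⋃ i, U i) = Set.univ ∧
      ∀ i, FibHomotopicOn pX pY f g (U i)} with hs
  rcases s.eq_empty_or_nonempty with he | hne
  · left
    rw [fibDist, ← hs, he, Set.image_empty, sInf_empty]
  · right
    refine ⟨sInf s, le_antisymm (sInf_le (Set.mem_image_of_mem _ (Nat.sInf_mem hne))) ?_,
      Nat.sInf_mem hne⟩
    refine le_sInf ?_
    rintro x ⟨k, hk, rfl⟩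
    exact_mod_cast Nat.cast_le.2 (Nat.sInf_le hk)

end Final

theorem fibDist_prodMap_add_le (pX : X → B) (pX' : X' → B) (pY : Y → B) (pY' : Y' → B)
    (f g : X → Y) (f' g' : X' → Y')
    (hN : NormalSpace {z : X × X' // pX z.1 = pX' z.2})
    (hf : Continuous f) (hg : Continuous g) (hf' : Continuous f') (hg' : Continuous g')
    (hfp : ∀ x, pY (f x) = pX x) (hgp : ∀ x, pY (g x) = pX x)
    (hfp' : ∀ x, pY' (f' x) = pX' x) (hgp' : ∀ x, pY' (g' x) = pX' x) :
    fibDist (fun z : {z : X × X' // pX z.1 = pX' z.2} => pX z.val.1)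
      (fun w : {w : Y × Y' // pY w.1 = pY' w.2} => pY w.val.1)
      (fun z => (⟨(f z.val.1, f' z.val.2),
        (hfp z.val.1).trans (z.prop.trans (hfp' z.val.2).symm)⟩ :
          {w : Y × Y' // pY w.1 = pY' w.2}))
      (fun z => (⟨(g z.val.1, g' z.val.2),
        (hgp z.val.1).trans (z.prop.trans (hgp' z.val.2).symm)⟩ :
          {w : Y × Y' // pY w.1 = pY' w.2}))
      ≤ fibDist pX pY f g + fibDist pX' pY' f' g' := by
  rcases fibDist_cases pX pY f g with h | ⟨n, hn, U, hUo, hUc, hU⟩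
  · rw [h, top_add]; exact le_top
  rcases fibDist_cases pX' pY' f' g' with h' | ⟨m, hm, V, hVo, hVc, hV⟩
  · rw [h', add_top]; exact le_top
  rw [hn, hm, ← Nat.cast_add]
  obtain ⟨W, hWo, hWc, hW⟩ := main_cover hN hfp hgp hfp' hgp' U V hUo hUc hU hVo hVc hV
  exact fibDist_le_of_mem _ _ _ _ ⟨W, hWo, hWc, hW⟩
end

section
/- For fibrewise pointed maps f, g : X → Y over B, D_B(f, g) ≤ (cat_B^*(f) + 1) · (cat_B^*(g) + 1). -/
open scoped unitInterval

variable {B X Y Z X' Y' : Type*} [TopologicalSpace B] [TopologicalSpace X]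
  [TopologicalSpace Y] [TopologicalSpace Z] [TopologicalSpace X'] [TopologicalSpace Y']

/-! If `X = ⋃ U i` with `f ≃_B s_Y ∘ p_X` on each `U i` (`n + 1` sets) and `X = ⋃ V j` with
`g ≃_B s_Y ∘ p_X` on each `V j` (`m + 1` sets), then on each of the `(n + 1)(m + 1)` open sets
`U i ∩ V j` the first homotopy followed by the reverse of the second is a fibrewise homotopy
`f ≃_B g`. -/

open ContinuousMap

section FibHomotopicOn

variable {pX : X → B} {pY : Y → B} {f g h : X → Y} {U W : Set X}

omit [TopologicalSpace B] in
theorem fibHomotopicOn_iff :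
    FibHomotopicOn pX pY f g U ↔ ∃ f₀ g₀ : C(U, Y), (∀ u, f₀ u = f u) ∧ (∀ u, g₀ u = g u) ∧
      HomotopicWith f₀ g₀ (fun k => ∀ u, pY (k u) = pX u) := by
  constructor
  · rintro ⟨H, h0, h1, hp⟩
    refine ⟨H.comp (.prodMk (.id U) (.const U 0)), H.comp (.prodMk (.id U) (.const U 1)),
      h0, h1, ⟨⟨⟨H.comp .prodSwap, fun _ => rfl, fun _ => rfl⟩, fun t u => hp u t⟩⟩⟩
  · rintro ⟨f₀, g₀, hf₀, hg₀, ⟨F⟩⟩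
    exact ⟨F.toContinuousMap.comp .prodSwap, fun u => by simpa using hf₀ u,
      fun u => by simpa using hg₀ u, fun u t => F.prop t u⟩

omit [TopologicalSpace B] in
theorem FibHomotopicOn.mono_s15 (hU : FibHomotopicOn pX pY f g U) (hWU : W ⊆ U) :
    FibHomotopicOn pX pY f g W := by
  obtain ⟨H, h0, h1, hp⟩ := hU
  let i : C(W × I, U × I) := .prodMap ⟨Set.inclusion hWU, continuous_inclusion hWU⟩ (.id I)
  exact ⟨H.comp i, fun _ => h0 _, fun _ => h1 _, fun _ _ => hp _ _⟩

omit [TopologicalSpace B] in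
theorem FibHomotopicOn.symm (hfg : FibHomotopicOn pX pY f g U) : FibHomotopicOn pX pY g f U := by
  obtain ⟨f₀, g₀, hf₀, hg₀, hH⟩ := fibHomotopicOn_iff.1 hfg
  exact fibHomotopicOn_iff.2 ⟨g₀, f₀, hg₀, hf₀, hH.symm⟩

omit [TopologicalSpace B] in
theorem FibHomotopicOn.trans (hfg : FibHomotopicOn pX pY f g U)
    (hgh : FibHomotopicOn pX pY g h U) : FibHomotopicOn pX pY f h U := by
  obtain ⟨f₀, g₀, hf₀, hg₀, hH⟩ := fibHomotopicOn_iff.1 hfg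
  obtain ⟨g₁, h₀, hg₁, hh₀, hK⟩ := fibHomotopicOn_iff.1 hgh
  obtain rfl : g₀ = g₁ := ext fun u => (hg₀ u).trans (hg₁ u).symm
  exact fibHomotopicOn_iff.2 ⟨f₀, h₀, hf₀, hh₀, hH.trans hK⟩

end FibHomotopicOn

def HasFibHomotopicCover (pX : X → B) (pY : Y → B) (f g : X → Y) (n : ℕ) : Prop :=
  ∃ U : Fin (n + 1) → Set X,
    (∀ i, IsOpen (U i)) ∧ (⋃ i, U i) = Set.univ ∧ ∀ i, FibHomotopicOn pX pY f g (U i)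

section HasFibHomotopicCover

variable {pX : X → B} {pY : Y → B} {f g h : X → Y}

omit [TopologicalSpace B] in
theorem fibDist_eq_sInf :
    fibDist pX pY f g = sInf ((↑) '' {n : ℕ | HasFibHomotopicCover pX pY f g n}) := rfl

omit [TopologicalSpace B] in
theorem fibDist_le {n : ℕ} (hn : HasFibHomotopicCover pX pY f g n) : fibDist pX pY f g ≤ n :=
  sInf_le ⟨n, hn, rfl⟩

omit [TopologicalSpace B] in
theorem exists_hasFibHomotopicCover_of_fibDist_ne_top (h : fibDist pX pY f g ≠ ⊤) :
    ∃ n : ℕ, fibDist pX pY f g = n ∧ HasFibHomotopicCover pX pY f g n := by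
  rw [fibDist_eq_sInf] at h ⊢
  have hne : ((↑) '' {n : ℕ | HasFibHomotopicCover pX pY f g n} : Set ℕ∞).Nonempty :=
    Set.nonempty_iff_ne_empty.2 fun he => h (by rw [he, sInf_empty])
  obtain ⟨n, hn, hn_eq⟩ := csInf_mem hne
  exact ⟨n, hn_eq.symm, hn⟩

omit [TopologicalSpace B] in
theorem hasFibHomotopicCover_of_equiv {ι : Type*} {n : ℕ} (e : ι ≃ Fin (n + 1))
    (U : ι → Set X) (hU : ∀ i, IsOpen (U i)) (hcov : (⋃ i, U i) = Set.univ)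
    (hfg : ∀ i, FibHomotopicOn pX pY f g (U i)) : HasFibHomotopicCover pX pY f g n :=
  ⟨U ∘ e.symm, fun _ => hU _, (e.symm.surjective.iSup_comp U).trans hcov, fun _ => hfg _⟩

omit [TopologicalSpace B] in
theorem HasFibHomotopicCover.inter {n m : ℕ} (hf : HasFibHomotopicCover pX pY f h n)
    (hg : HasFibHomotopicCover pX pY g h m) :
    HasFibHomotopicCover pX pY f g (n * m + n + m) := by
  obtain ⟨U, hUo, hUcov, hUf⟩ := hf
  obtain ⟨V, hVo, hVcov, hVg⟩ := hg
  have hcard : (n + 1) * (m + 1) = n * m + n + m + 1 := by ring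
  refine hasFibHomotopicCover_of_equiv (finProdFinEquiv.trans (finCongr hcard))
    (fun ij => U ij.1 ∩ V ij.2) (fun _ => (hUo _).inter (hVo _)) ?_
    fun _ => ((hUf _).mono_s15 Set.inter_subset_left).trans ((hVg _).mono_s15 Set.inter_subset_right).symm
  rw [Set.iUnion_prod', ← Set.iUnion_inter_iUnion, hUcov, hVcov, Set.univ_inter]

omit [TopologicalSpace B] in
theorem fibDist_le_mul_add (f g h : X → Y) :
    fibDist pX pY f g ≤
      fibDist pX pY f h * fibDist pX pY g h + fibDist pX pY f h + fibDist pX pY g h := by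
  rcases eq_or_ne (fibDist pX pY f h) ⊤ with hf | hf
  · simp [hf]
  rcases eq_or_ne (fibDist pX pY g h) ⊤ with hg | hg
  · simp [hg]
  obtain ⟨n, hn, hUf⟩ := exists_hasFibHomotopicCover_of_fibDist_ne_top hf
  obtain ⟨m, hm, hVg⟩ := exists_hasFibHomotopicCover_of_fibDist_ne_top hg
  rw [hn, hm]
  exact_mod_cast fibDist_le (hUf.inter hVg)

end HasFibHomotopicCover

theorem fibDist_le_mul_cats_general (pX : X → B) (pY : Y → B) (sY : B → Y)
    (f g : X → Y) :
    fibDist pX pY f g ≤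
      (fibDist pX pY f (fun x => sY (pX x)) + 1) *
        (fibDist pX pY g (fun x => sY (pX x)) + 1) := by
  refine (fibDist_le_mul_add f g (fun x => sY (pX x))).trans ?_
  rw [add_one_mul, mul_add_one, ← add_assoc]
  exact le_self_add

theorem fibDist_le_mul_cats (pX : X → B) (pY : Y → B) (sX : B → X) (sY : B → Y)
    (f g : X → Y)
    (hpX : Continuous pX) (hpY : Continuous pY) (hsX : Continuous sX) (hsY : Continuous sY)
    (hsecX : ∀ b, pX (sX b) = b) (hsecY : ∀ b, pY (sY b) = b)
    (hf : Continuous f) (hg : Continuous g)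
    (hfp : ∀ x, pY (f x) = pX x) (hgp : ∀ x, pY (g x) = pX x)
    (hfs : ∀ b, f (sX b) = sY b) (hgs : ∀ b, g (sX b) = sY b) :
    fibDist pX pY f g ≤
      (fibDist pX pY f (fun x => sY (pX x)) + 1) *
        (fibDist pX pY g (fun x => sY (pX x)) + 1) :=
  fibDist_le_mul_cats_general pX pY sY f g
end
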